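/- Let C and C̄ form a timelike (1,3)-Bertrand pair in E⁴₂ via the map φ and real constants α, β with c̄(φ(s)) = c(s) + α·n₁(s) + β·n₃(s) for all s. Then for all s: φ'(s)·t̄(φ(s)) = (1 + α·k₁(s))·t(s) + (α·k₂(s) - β·k₃(s))·n₂(s), the identity (φ'(s))² = (1 + α·k₁(s))² - (α·k₂(s) - β·k₃(s))² holds, and there exist real constants p, q with p² - q² = 1 such that 1 + α·k₁(s) = p·φ'(s) and α·k₂(s) - β·k₃(s) = q·φ'(s) for all s. -/

import Mathlib

noncomputable section

/-- The indefinite metric of semi-Euclidean space `E⁴₂`: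
`g(v,w) = -v₁w₁ - v₂w₂ + v₃w₃ + v₄w₄`. -/
def g4 (v w : Fin 4 → ℝ) : ℝ :=
  -(v 0 * w 0) - v 1 * w 1 + v 2 * w 2 + v 3 * w 3

/-- The semi-Euclidean norm `‖v‖ = √|g(v,v)|` in `E⁴₂`. -/
def nrm4 (v : Fin 4 → ℝ) : ℝ := Real.sqrt |g4 v v|

/-- A `C^∞`-special timelike Frenet curve in `E⁴₂`: a unit-speed timelike curve
with Frenet frame `t, n₁, n₂, n₃` (with `t, n₁` timelike and `n₂, n₃` spacelike)
and nowhere-vanishing curvatures `k₁, k₂, k₃` satisfying the Frenet equations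
`t' = -k₁·n₁`, `n₁' = k₁·t + k₂·n₂`, `n₂' = k₂·n₁ + k₃·n₃`, `n₃' = -k₃·n₂`. -/
structure TimelikeFrenetE42 where
  c : ℝ → Fin 4 → ℝ
  t : ℝ → Fin 4 → ℝ
  n1 : ℝ → Fin 4 → ℝ
  n2 : ℝ → Fin 4 → ℝ
  n3 : ℝ → Fin 4 → ℝ
  k1 : ℝ → ℝ
  k2 : ℝ → ℝ
  k3 : ℝ → ℝ
  smooth_c : ContDiff ℝ (⊤ : ℕ∞) c
  smooth_t : ContDiff ℝ (⊤ : ℕ∞) t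
  smooth_n1 : ContDiff ℝ (⊤ : ℕ∞) n1
  smooth_n2 : ContDiff ℝ (⊤ : ℕ∞) n2
  smooth_n3 : ContDiff ℝ (⊤ : ℕ∞) n3
  smooth_k1 : ContDiff ℝ (⊤ : ℕ∞) k1
  smooth_k2 : ContDiff ℝ (⊤ : ℕ∞) k2
  smooth_k3 : ContDiff ℝ (⊤ : ℕ∞) k3
  deriv_c : ∀ s, HasDerivAt c (t s) s
  unit_t : ∀ s, g4 (t s) (t s) = -1
  unit_n1 : ∀ s, g4 (n1 s) (n1 s) = -1
  unit_n2 : ∀ s, g4 (n2 s) (n2 s) = 1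
  unit_n3 : ∀ s, g4 (n3 s) (n3 s) = 1
  orth_t_n1 : ∀ s, g4 (t s) (n1 s) = 0
  orth_t_n2 : ∀ s, g4 (t s) (n2 s) = 0
  orth_t_n3 : ∀ s, g4 (t s) (n3 s) = 0
  orth_n1_n2 : ∀ s, g4 (n1 s) (n2 s) = 0
  orth_n1_n3 : ∀ s, g4 (n1 s) (n3 s) = 0
  orth_n2_n3 : ∀ s, g4 (n2 s) (n3 s) = 0
  k1_ne : ∀ s, k1 s ≠ 0
  k2_ne : ∀ s, k2 s ≠ 0
  k3_ne : ∀ s, k3 s ≠ 0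
  frenet_t : ∀ s, HasDerivAt t (-(k1 s) • n1 s) s
  frenet_n1 : ∀ s, HasDerivAt n1 (k1 s • t s + k2 s • n2 s) s
  frenet_n2 : ∀ s, HasDerivAt n2 (k2 s • n1 s + k3 s • n3 s) s
  frenet_n3 : ∀ s, HasDerivAt n3 (-(k3 s) • n2 s) s

/-! The tangent of the partner curve satisfies `φ' t̄ ∘ φ = (1 + α k₁) t + (α k₂ - β k₃) n₂`,
obtained by differentiating `c̄ ∘ φ = c + α n₁ + β n₃`. The components `g(t̄ ∘ φ, t)` and
`g(t̄ ∘ φ, n₂)` are then constant: differentiating them, the terms from `t̄'` involve `n̄₁`, which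
lies in the plane of `n₁, n₃` and so is orthogonal to `t` and `n₂`, and the terms from the Frenet
derivatives of `t, n₂` involve `n₁, n₃`, which are orthogonal to `t̄ ∘ φ ∈ span (t, n₂)`. These two
constants are `-p` and `q`, and `p² - q² = 1` comes from `g(t̄, t̄) = -1`. -/

lemma g4_comm (u v : Fin 4 → ℝ) : g4 u v = g4 v u := by
  unfold g4; ring

lemma g4_add_left (u v w : Fin 4 → ℝ) : g4 (u + v) w = g4 u w + g4 v w := by
  simp only [g4, Pi.add_apply]; ring

lemma g4_add_right (u v w : Fin 4 → ℝ) : g4 u (v + w) = g4 u v + g4 u w := by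
  rw [g4_comm, g4_add_left, g4_comm v, g4_comm w]

lemma g4_smul_left (a : ℝ) (u w : Fin 4 → ℝ) : g4 (a • u) w = a * g4 u w := by
  simp only [g4, Pi.smul_apply, smul_eq_mul]; ring

lemma g4_smul_right (a : ℝ) (u w : Fin 4 → ℝ) : g4 u (a • w) = a * g4 u w := by
  rw [g4_comm, g4_smul_left, g4_comm]

lemma g4_eq_zero_of_mem_span_pair {u v w x : Fin 4 → ℝ} (hu : g4 u w = 0) (hv : g4 v w = 0)
    (hx : x ∈ Submodule.span ℝ ({u, v} : Set (Fin 4 → ℝ))) : g4 x w = 0 := by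
  obtain ⟨a, b, rfl⟩ := Submodule.mem_span_pair.1 hx
  rw [g4_add_left, g4_smul_left, g4_smul_left, hu, hv]; ring

theorem HasDerivAt.g4 {u v : ℝ → Fin 4 → ℝ} {u' v' : Fin 4 → ℝ} {s : ℝ}
    (hu : HasDerivAt u u' s) (hv : HasDerivAt v v' s) :
    HasDerivAt (fun s ↦ g4 (u s) (v s)) (g4 u' (v s) + g4 (u s) v') s := by
  have hu' := hasDerivAt_pi.1 hu
  have hv' := hasDerivAt_pi.1 hv
  refine (((((hu' 0).mul (hv' 0)).neg.sub ((hu' 1).mul (hv' 1))).add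
    ((hu' 2).mul (hv' 2))).add ((hu' 3).mul (hv' 3))).congr_deriv ?_
  unfold _root_.g4; ring

lemma eq_of_hasDerivAt_zero {𝕜 G : Type*} [RCLike 𝕜] [NormedAddCommGroup G] [NormedSpace 𝕜 G]
    {f : 𝕜 → G} (hf : ∀ x, HasDerivAt f 0 x) (x y : 𝕜) : f x = f y :=
  is_const_of_deriv_eq_zero (fun x ↦ (hf x).differentiableAt) (fun x ↦ (hf x).deriv) x y

namespace TimelikeFrenetE42

section Frame

variable (C : TimelikeFrenetE42) (a b s : ℝ)

lemma g4_comb_t : g4 (a • C.t s + b • C.n2 s) (C.t s) = -a := by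
  rw [g4_add_left, g4_smul_left, g4_smul_left, C.unit_t, g4_comm, C.orth_t_n2]; ring

lemma g4_comb_n1 : g4 (a • C.t s + b • C.n2 s) (C.n1 s) = 0 := by
  rw [g4_add_left, g4_smul_left, g4_smul_left, C.orth_t_n1, g4_comm, C.orth_n1_n2]; ring

lemma g4_comb_n2 : g4 (a • C.t s + b • C.n2 s) (C.n2 s) = b := by
  rw [g4_add_left, g4_smul_left, g4_smul_left, C.orth_t_n2, C.unit_n2]; ring

lemma g4_comb_n3 : g4 (a • C.t s + b • C.n2 s) (C.n3 s) = 0 := by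
  rw [g4_add_left, g4_smul_left, g4_smul_left, C.orth_t_n3, C.orth_n2_n3]; ring

lemma g4_comb_self :
    g4 (a • C.t s + b • C.n2 s) (a • C.t s + b • C.n2 s) = b ^ 2 - a ^ 2 := by
  rw [g4_add_right, g4_smul_right, g4_smul_right, g4_comb_t, g4_comb_n2]; ring

end Frame

section BertrandPair

variable {C Cb : TimelikeFrenetE42} {φ : ℝ → ℝ} {α β : ℝ}

theorem deriv_smul_tangent_eq (hpos : ∀ s, Cb.c (φ s) = C.c s + α • C.n1 s + β • C.n3 s)
    {s : ℝ} (hφ : DifferentiableAt ℝ φ s) :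
    deriv φ s • Cb.t (φ s) = (1 + α * C.k1 s) • C.t s + (α * C.k2 s - β * C.k3 s) • C.n2 s := by
  have hL : HasDerivAt (fun s ↦ Cb.c (φ s)) (deriv φ s • Cb.t (φ s)) s :=
    (Cb.deriv_c (φ s)).scomp s hφ.hasDerivAt
  have hR : HasDerivAt (fun s ↦ C.c s + α • C.n1 s + β • C.n3 s)
      (C.t s + α • (C.k1 s • C.t s + C.k2 s • C.n2 s) + β • (-(C.k3 s) • C.n2 s)) s :=
    ((C.deriv_c s).add ((C.frenet_n1 s).const_smul α)).add ((C.frenet_n3 s).const_smul β)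
  rw [funext hpos] at hL
  rw [hL.unique hR]
  module

lemma g4_eq_zero_of_smul_eq_comb {T : Fin 4 → ℝ} {d a b s : ℝ} {n : Fin 4 → ℝ} (hd : d ≠ 0)
    (hT : d • T = a • C.t s + b • C.n2 s) (hn : g4 (a • C.t s + b • C.n2 s) n = 0) :
    g4 T n = 0 := by
  rw [← hT, g4_smul_left] at hn
  exact (mul_eq_zero.1 hn).resolve_left hd

lemma g4_n1_eq_zero_of_span_eq {s : ℝ}
    (hspan : Submodule.span ℝ ({Cb.n1 (φ s), Cb.n3 (φ s)} : Set (Fin 4 → ℝ)) =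
      Submodule.span ℝ ({C.n1 s, C.n3 s} : Set (Fin 4 → ℝ)))
    {w : Fin 4 → ℝ} (h1 : g4 (C.n1 s) w = 0) (h3 : g4 (C.n3 s) w = 0) :
    g4 (Cb.n1 (φ s)) w = 0 :=
  g4_eq_zero_of_mem_span_pair h1 h3 (hspan ▸ Submodule.subset_span (by simp))

variable (hφ : Differentiable ℝ φ) (hφ' : ∀ s, deriv φ s ≠ 0)
  (hpos : ∀ s, Cb.c (φ s) = C.c s + α • C.n1 s + β • C.n3 s)
  (hspan : ∀ s, Submodule.span ℝ ({Cb.n1 (φ s), Cb.n3 (φ s)} : Set (Fin 4 → ℝ)) =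
      Submodule.span ℝ ({C.n1 s, C.n3 s} : Set (Fin 4 → ℝ)))
include hφ hφ' hpos hspan

theorem g4_t_comp_t_eq (s r : ℝ) :
    g4 (Cb.t (φ s)) (C.t s) = g4 (Cb.t (φ r)) (C.t r) := by
  refine eq_of_hasDerivAt_zero (f := fun s ↦ g4 (Cb.t (φ s)) (C.t s)) (fun s ↦ ?_) s r
  have hn1 : g4 (Cb.n1 (φ s)) (C.t s) = 0 := g4_n1_eq_zero_of_span_eq (hspan s)
    ((g4_comm _ _).trans (C.orth_t_n1 s)) ((g4_comm _ _).trans (C.orth_t_n3 s))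
  have hT : g4 (Cb.t (φ s)) (C.n1 s) = 0 :=
    g4_eq_zero_of_smul_eq_comb (hφ' s) (deriv_smul_tangent_eq hpos (hφ s)) (C.g4_comb_n1 _ _ s)
  refine (((Cb.frenet_t (φ s)).scomp s (hφ s).hasDerivAt).g4 (C.frenet_t s)).congr_deriv ?_
  rw [Function.comp_apply, g4_smul_left, g4_smul_left, g4_smul_right, hn1, hT]; ring

theorem g4_t_comp_n2_eq (s r : ℝ) :
    g4 (Cb.t (φ s)) (C.n2 s) = g4 (Cb.t (φ r)) (C.n2 r) := by
  refine eq_of_hasDerivAt_zero (f := fun s ↦ g4 (Cb.t (φ s)) (C.n2 s)) (fun s ↦ ?_) s r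
  have hn1 : g4 (Cb.n1 (φ s)) (C.n2 s) = 0 := g4_n1_eq_zero_of_span_eq (hspan s)
    (C.orth_n1_n2 s) ((g4_comm _ _).trans (C.orth_n2_n3 s))
  have hdec := deriv_smul_tangent_eq hpos (hφ s)
  have hT1 : g4 (Cb.t (φ s)) (C.n1 s) = 0 :=
    g4_eq_zero_of_smul_eq_comb (hφ' s) hdec (C.g4_comb_n1 _ _ s)
  have hT3 : g4 (Cb.t (φ s)) (C.n3 s) = 0 :=
    g4_eq_zero_of_smul_eq_comb (hφ' s) hdec (C.g4_comb_n3 _ _ s)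
  refine (((Cb.frenet_t (φ s)).scomp s (hφ s).hasDerivAt).g4 (C.frenet_n2 s)).congr_deriv ?_
  rw [Function.comp_apply, g4_smul_left, g4_smul_left, g4_add_right, g4_smul_right,
    g4_smul_right, hn1, hT1, hT3]
  ring

end BertrandPair

end TimelikeFrenetE42

open TimelikeFrenetE42 in
/-- For a timelike `(1,3)`-Bertrand pair in `E⁴₂` with constant `α, β`:
`φ'(s)·t̄(φ(s)) = (1 + α·k₁(s))·t(s) + (α·k₂(s) - β·k₃(s))·n₂(s)`, the identity
`(φ'(s))² = (1 + α·k₁(s))² - (α·k₂(s) - β·k₃(s))²` holds, and there are constants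
`p, q` with `p² - q² = 1` such that `1 + α·k₁ = p·φ'` and `α·k₂ - β·k₃ = q·φ'`. -/
theorem bertrand13_E42_tangent_decomposition
    (C Cb : TimelikeFrenetE42) (φ : ℝ → ℝ) (α β : ℝ)
    (hφ : ContDiff ℝ (⊤ : ℕ∞) φ) (hφ' : ∀ s, deriv φ s ≠ 0)
    (hpos : ∀ s, Cb.c (φ s) = C.c s + α • C.n1 s + β • C.n3 s)
    (hspan : ∀ s, Submodule.span ℝ ({Cb.n1 (φ s), Cb.n3 (φ s)} : Set (Fin 4 → ℝ)) =
      Submodule.span ℝ ({C.n1 s, C.n3 s} : Set (Fin 4 → ℝ))) :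
    (∀ s, (deriv φ s) • Cb.t (φ s) =
        (1 + α * C.k1 s) • C.t s + (α * C.k2 s - β * C.k3 s) • C.n2 s) ∧
    (∀ s, (deriv φ s) ^ 2 = (1 + α * C.k1 s) ^ 2 - (α * C.k2 s - β * C.k3 s) ^ 2) ∧
    (∃ p q : ℝ, p ^ 2 - q ^ 2 = 1 ∧
      ∀ s, 1 + α * C.k1 s = p * deriv φ s ∧ α * C.k2 s - β * C.k3 s = q * deriv φ s) := by
  have hφd : Differentiable ℝ φ := hφ.differentiable (by simp)
  have hdec s := deriv_smul_tangent_eq hpos (hφd s)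
  have hsq s : deriv φ s ^ 2 = (1 + α * C.k1 s) ^ 2 - (α * C.k2 s - β * C.k3 s) ^ 2 := by
    have h := congrArg (fun v ↦ g4 v v) (hdec s)
    simp only [g4_smul_left, g4_smul_right, Cb.unit_t, C.g4_comb_self] at h
    linear_combination -h
  have hp s : 1 + α * C.k1 s = -g4 (Cb.t (φ 0)) (C.t 0) * deriv φ s := by
    have h := congrArg (g4 · (C.t s)) (hdec s)
    simp only [g4_smul_left, C.g4_comb_t, g4_t_comp_t_eq hφd hφ' hpos hspan s 0] at h
    linear_combination h
  have hq s : α * C.k2 s - β * C.k3 s = g4 (Cb.t (φ 0)) (C.n2 0) * deriv φ s := by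
    have h := congrArg (g4 · (C.n2 s)) (hdec s)
    simp only [g4_smul_left, C.g4_comb_n2, g4_t_comp_n2_eq hφd hφ' hpos hspan s 0] at h
    linear_combination -h
  refine ⟨hdec, hsq, _, _, ?_, fun s ↦ ⟨hp s, hq s⟩⟩
  have h0 := hsq 0
  rw [hp 0, hq 0] at h0
  exact mul_right_cancel₀ (pow_ne_zero 2 (hφ' 0)) (by linear_combination -h0)
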